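/- For an augmented unital associative dg algebra A over R, the concatenation operator ∇ : BA⊗BA → BA, [a₁|⋯|a_k]⊗[b₁|⋯|b_l] ↦ [a₁|⋯|a_k|b₁|⋯|b_l], is a chain homotopy inverse-type identity: its differential equals d(∇) = ∇⁽³⁾(1⊗μ̄⊗1)(1⊗π⊗π⊗1)(Δ⊗Δ), where π : BA → B₁A = s⁻¹A is the projection, μ̄ = σ⁻¹μ_A(σ⊗σ) : s⁻¹A⊗s⁻¹A → s⁻¹A is the desuspended multiplication, Δ is the deconcatenation coproduct and ∇⁽³⁾ the threefold concatenation. -/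

import Mathlib

open scoped TensorProduct

noncomputable section

/-- The sign `(-1)^n` as an integer, for `n : ℤ`. -/
def pm (n : ℤ) : ℤ := (((-1 : ℤˣ) ^ n : ℤˣ) : ℤ)

/-- The total desuspended degree `Σᵢ (nᵢ - 1)` of a list of (cohomological) degrees;
this is the degree of the bar word `[a₁|⋯|a_k]` when `aᵢ` has degree `nᵢ`. -/
def bdeg (ds : List ℤ) : ℤ := (ds.map (fun n => n - 1)).sum

/-- An augmented, unital, associative differential graded algebra over a commutative
unital ring `R`, with cohomological grading (the differential has degree `+1`).
The grading is internal (`grading_internal`), multiplication and unit are graded,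
the differential satisfies the graded Leibniz rule, and the augmentation is a
map of augmented dg algebras.  The operator `sgn` is the canonical "sign" operator
multiplying the component of degree `i` by `(-1)^i`; it is uniquely determined by the
grading and is included as data for convenience (Koszul signs). -/
structure DGAlgebra (R : Type) [CommRing R] : Type 1 where
  carrier : Type
  [ring : Ring carrier]
  [alg : Algebra R carrier]
  grading : ℤ → Submodule R carrier
  grading_internal : DirectSum.IsInternal grading
  one_mem : (1 : carrier) ∈ grading 0
  mul_mem : ∀ {i j : ℤ} {a b : carrier},
    a ∈ grading i → b ∈ grading j → (a * b) ∈ grading (i + j)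
  d : carrier →ₗ[R] carrier
  d_mem : ∀ {i : ℤ} {a : carrier}, a ∈ grading i → d a ∈ grading (i + 1)
  d_sq : ∀ a, d (d a) = 0
  leibniz : ∀ {i : ℤ} {a b : carrier}, a ∈ grading i →
    d (a * b) = d a * b + pm i • (a * d b)
  aug : carrier →ₐ[R] R
  aug_d : ∀ a, aug (d a) = 0
  aug_graded : ∀ {i : ℤ} {a : carrier}, a ∈ grading i → i ≠ 0 → aug a = 0
  sgn : carrier →ₗ[R] carrier
  sgn_apply : ∀ {i : ℤ} {a : carrier}, a ∈ grading i → sgn a = pm i • a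

attribute [instance] DGAlgebra.ring DGAlgebra.alg

namespace DGAlgebra

variable {R : Type} [CommRing R] (A : DGAlgebra R)

/-- The unnormalized bar construction `BA = T(s⁻¹A)` of `A`, *as a graded `R`-module*.
At the level of (ungraded) `R`-modules it is the tensor algebra on the underlying
module of `A`; the word `[a₁|⋯|a_k]` is the product `ι a₁ ⋯ ι a_k`.  The
(de)suspension is invisible at the module level; it is accounted for by the degree
conventions (`bdeg`) and the sign operators. -/
abbrev Bar : Type := TensorAlgebra R A.carrier

/-- The bar word `[a₁|⋯|a_k] ∈ BA`. The empty word is the counit element `𝟙`. -/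
def word (l : List A.carrier) : A.Bar := (l.map (TensorAlgebra.ι R)).prod

/-- `A.Homog l ds` says that the list `l` consists of homogeneous elements,
`l i` having degree `ds i`. -/
def Homog (l : List A.carrier) (ds : List ℤ) : Prop :=
  l.length = ds.length ∧ ∀ i : ℕ, l.getD i 0 ∈ A.grading (ds.getD i 0)

/-- The concatenation operator `∇ : BA ⊗ BA → BA`. -/
def concat : A.Bar ⊗[R] A.Bar →ₗ[R] A.Bar := LinearMap.mul' R A.Bar

/-- The augmentation ideal `Ā ⊆ A`. -/
def augIdeal : Submodule R A.carrier := LinearMap.ker A.aug.toLinearMap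

/-- The normalized bar construction `B̄A = T(s⁻¹Ā)`. -/
abbrev NBar : Type := TensorAlgebra R A.augIdeal

/-- words in the normalized bar construction. -/
def nword (l : List A.augIdeal) : A.NBar := (l.map (TensorAlgebra.ι R)).prod

/-- The canonical inclusion `B̄A → BA`. -/
def nincl : A.NBar →ₗ[R] A.Bar :=
  (TensorAlgebra.lift R ((TensorAlgebra.ι R) ∘ₗ A.augIdeal.subtype)).toLinearMap

/-- The (internal, total-degree) grading of the bar construction:
`(BA)_n` is spanned by the homogeneous words of total desuspended degree `n`. -/
def barGrading (n : ℤ) : Submodule R A.Bar :=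
  Submodule.span R {x | ∃ l ds, A.Homog l ds ∧ bdeg ds = n ∧ x = A.word l}

end DGAlgebra

/-- All the canonical structure carried by the bar construction `BA` of an augmented
dg algebra `A`: the deconcatenation coproduct `Δ`, the bar differential `dB`
(tensor-product differential plus the `∂` multiplying adjacent entries through the
desuspended multiplication), the sign operator `sgnB`, the graded twist `tw`, the
canonical twisting cochain `α` (projection to `B₁A = s⁻¹A` followed by `σ`), and the
counit `εB`.  Each operator is uniquely determined by its prescribed values on the
words `[a₁|⋯|a_k]`, which span `BA`. -/
structure BarData {R : Type} [CommRing R] (A : DGAlgebra R) : Type where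
  /-- deconcatenation coproduct -/
  Δ : A.Bar →ₗ[R] A.Bar ⊗[R] A.Bar
  Δ_word : ∀ l : List A.carrier,
    Δ (A.word l) = ∑ i ∈ Finset.range (l.length + 1),
      A.word (l.take i) ⊗ₜ[R] A.word (l.drop i)
  /-- the bar differential -/
  dB : A.Bar →ₗ[R] A.Bar
  dB_word : ∀ (l : List A.carrier) (ds : List ℤ), A.Homog l ds →
    dB (A.word l) =
      - (∑ i ∈ Finset.range l.length,
          pm (bdeg (ds.take i)) • A.word (l.set i (A.d (l.getD i 0))))
      + ∑ i ∈ Finset.range (l.length - 1),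
          pm (bdeg (ds.take (i + 1))) •
            A.word (l.take i ++ (l.getD i 0 * l.getD (i + 1) 0) :: l.drop (i + 2))
  /-- the sign operator of `BA` -/
  sgnB : A.Bar →ₗ[R] A.Bar
  sgnB_word : ∀ (l : List A.carrier) (ds : List ℤ), A.Homog l ds →
    sgnB (A.word l) = pm (bdeg ds) • A.word l
  /-- the graded (Koszul) twist `BA ⊗ BA → BA ⊗ BA` -/
  tw : A.Bar ⊗[R] A.Bar →ₗ[R] A.Bar ⊗[R] A.Bar
  tw_word : ∀ (l m : List A.carrier) (ds es : List ℤ), A.Homog l ds → A.Homog m es →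
    tw (A.word l ⊗ₜ[R] A.word m) = pm (bdeg ds * bdeg es) • (A.word m ⊗ₜ[R] A.word l)
  /-- the canonical twisting cochain `α : BA → A` -/
  α : A.Bar →ₗ[R] A.carrier
  α_single : ∀ a : A.carrier, α (A.word [a]) = a
  α_word : ∀ l : List A.carrier, l.length ≠ 1 → α (A.word l) = 0
  /-- the counit of `BA` -/
  εB : A.Bar →ₗ[R] R
  εB_one : εB (1 : A.Bar) = 1
  εB_word : ∀ l : List A.carrier, l ≠ [] → εB (A.word l) = 0

namespace BarData

variable {R : Type} [CommRing R] {A : DGAlgebra R} (BD : BarData A)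

/-- `sgnB` raised to the power `n` (only the parity of `n` matters);
used to express Koszul signs `(-1)^{n·|x|}`. -/
def sgnPow (n : ℤ) : A.Bar →ₗ[R] A.Bar :=
  if n % 2 = 0 then LinearMap.id else BD.sgnB

/-- The differential of `BA ⊗ BA` (with the Koszul sign rule). -/
def dBB : A.Bar ⊗[R] A.Bar →ₗ[R] A.Bar ⊗[R] A.Bar :=
  TensorProduct.map BD.dB LinearMap.id + TensorProduct.map BD.sgnB BD.dB

/-- The middle interchange `1 ⊗ tw ⊗ 1` on `(BA ⊗ BA) ⊗ (BA ⊗ BA)`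
(the graded twist of the two middle factors). -/
def midTw : (A.Bar ⊗[R] A.Bar) ⊗[R] (A.Bar ⊗[R] A.Bar) →ₗ[R]
    (A.Bar ⊗[R] A.Bar) ⊗[R] (A.Bar ⊗[R] A.Bar) :=
  let e₁ := TensorProduct.assoc R A.Bar A.Bar (A.Bar ⊗[R] A.Bar)
  let e₂ := TensorProduct.congr (LinearEquiv.refl R A.Bar)
    (TensorProduct.assoc R A.Bar A.Bar A.Bar).symm
  e₁.symm.toLinearMap ∘ₗ e₂.symm.toLinearMap ∘ₗ
    (TensorProduct.map LinearMap.id (TensorProduct.map BD.tw LinearMap.id)) ∘ₗ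
    e₂.toLinearMap ∘ₗ e₁.toLinearMap

/-- The coproduct of `BA ⊗ BA` (with Koszul signs). -/
def ΔBB : A.Bar ⊗[R] A.Bar →ₗ[R] (A.Bar ⊗[R] A.Bar) ⊗[R] (A.Bar ⊗[R] A.Bar) :=
  BD.midTw ∘ₗ TensorProduct.map BD.Δ BD.Δ

/-- The counit of `BA ⊗ BA`. -/
def εBB : A.Bar ⊗[R] A.Bar →ₗ[R] R :=
  (TensorProduct.lid R R).toLinearMap ∘ₗ TensorProduct.map BD.εB BD.εB

/-- The twisting cochain `β = ε_{BA} ⊗ α : BA ⊗ BA → A`. -/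
def β : A.Bar ⊗[R] A.Bar →ₗ[R] A.carrier :=
  (TensorProduct.lid R A.carrier).toLinearMap ∘ₗ TensorProduct.map BD.εB BD.α

end BarData

/-- `E : BA ⊗ BA → A` is a twisting cochain: it has degree `+1`, satisfies
`E(𝟙,-) = E(-,𝟙) = α` and the twisting cochain equation `d(E) = E ∪ E`,
written as `d∘E + E∘d_{BA⊗BA} = μ_A (E ⊗ E) Δ_{BA⊗BA}` (all Koszul signs being
expressed via the sign operators). -/
structure IsTwistingCochain {R : Type} [CommRing R] {A : DGAlgebra R} (BD : BarData A)
    (E : A.Bar ⊗[R] A.Bar →ₗ[R] A.carrier) : Prop where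
  degree : ∀ (l m : List A.carrier) (ds es : List ℤ), A.Homog l ds → A.Homog m es →
    E (A.word l ⊗ₜ[R] A.word m) ∈ A.grading (bdeg ds + bdeg es + 1)
  unit_left : ∀ b : A.Bar, E ((1 : A.Bar) ⊗ₜ[R] b) = BD.α b
  unit_right : ∀ a : A.Bar, E (a ⊗ₜ[R] (1 : A.Bar)) = BD.α a
  twist : A.d ∘ₗ E + E ∘ₗ BD.dBB =
    LinearMap.mul' R A.carrier ∘ₗ
      TensorProduct.map (E ∘ₗ TensorProduct.map BD.sgnB BD.sgnB) E ∘ₗ BD.ΔBB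

/-- A twisting cochain is *normalized* if `E([1],𝟙) = E(𝟙,[1]) = 1`, if `E(a,b) = 0`
whenever the total bar length is `> 1` and some entry equals `1 ∈ A`, and if
`E(a,b)` lies in the augmentation ideal whenever the total bar length is `> 1`. -/
structure IsNormalized {R : Type} [CommRing R] {A : DGAlgebra R}
    (E : A.Bar ⊗[R] A.Bar →ₗ[R] A.carrier) : Prop where
  one_right : E (A.word [(1 : A.carrier)] ⊗ₜ[R] (1 : A.Bar)) = 1
  one_left : E ((1 : A.Bar) ⊗ₜ[R] A.word [(1 : A.carrier)]) = 1
  vanish : ∀ l m : List A.carrier, 1 < l.length + m.length →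
    ((1 : A.carrier) ∈ l ∨ (1 : A.carrier) ∈ m) → E (A.word l ⊗ₜ[R] A.word m) = 0
  aug_ideal : ∀ l m : List A.carrier, 1 < l.length + m.length →
    A.aug (E (A.word l ⊗ₜ[R] A.word m)) = 0

/-- A twisting cochain has *level 3* if `E(a,b) = 0` whenever `a` has bar length `> 1`. -/
def IsLevel3 {R : Type} [CommRing R] {A : DGAlgebra R}
    (E : A.Bar ⊗[R] A.Bar →ₗ[R] A.carrier) : Prop :=
  ∀ (l m : List A.carrier), 1 < l.length → E (A.word l ⊗ₜ[R] A.word m) = 0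

/-- A multiplication on the unnormalized bar construction `BA`: a morphism of
dg coalgebras `BA ⊗ BA → BA` of degree `0` having the counit element `𝟙` as a
two-sided unit (associativity is *not* required). -/
structure BarMult {R : Type} [CommRing R] {A : DGAlgebra R} (BD : BarData A) : Type where
  f : A.Bar ⊗[R] A.Bar →ₗ[R] A.Bar
  one_mul : ∀ b : A.Bar, f ((1 : A.Bar) ⊗ₜ[R] b) = b
  mul_one : ∀ a : A.Bar, f (a ⊗ₜ[R] (1 : A.Bar)) = a
  graded : ∀ (l m : List A.carrier) (ds es : List ℤ), A.Homog l ds → A.Homog m es →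
    f (A.word l ⊗ₜ[R] A.word m) ∈ A.barGrading (bdeg ds + bdeg es)
  chain : BD.dB ∘ₗ f = f ∘ₗ BD.dBB
  counit : BD.εB ∘ₗ f = BD.εBB
  coalg : BD.Δ ∘ₗ f = TensorProduct.map f f ∘ₗ BD.ΔBB

/-!
On a pair of bar words `[a₁|⋯|a_k] ⊗ [b₁|⋯|b_l]`, each term of the bar differential of the
concatenation either acts inside one of the two words, and then it reappears with the same
Koszul sign in `∇ ∘ d_{BA⊗BA}`, or it multiplies the two entries `a_k` and `b₁` at the seam.
So `d(∇)` is the single seam term `±[a₁|⋯|a_k b₁|⋯|b_l]`. On the other side `π ⊗ π` kills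
every pair of deconcatenations except the one splitting off `[a_k]` and `[b₁]`, which leaves
the same term. Homogeneous words span `BA`, so checking on them suffices.
-/

open Finset

lemma pm_add (a b : ℤ) : pm (a + b) = pm a * pm b := by
  simp [pm, zpow_add]

lemma pm_zero : pm 0 = 1 := by
  simp [pm]

lemma pm_sub_one (a : ℤ) : pm (a - 1) = -pm a := by
  simp [pm, zpow_sub]

lemma bdeg_append (ds es : List ℤ) : bdeg (ds ++ es) = bdeg ds + bdeg es := by
  simp [bdeg]

lemma bdeg_singleton (n : ℤ) : bdeg [n] = n - 1 := by
  simp [bdeg]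

namespace DGAlgebra

variable {R : Type} [CommRing R] (A : DGAlgebra R)

@[simp]
lemma word_nil : A.word [] = 1 := rfl

@[simp]
lemma word_cons (a : A.carrier) (l : List A.carrier) :
    A.word (a :: l) = TensorAlgebra.ι R a * A.word l := by
  simp [word]

lemma word_append (l m : List A.carrier) : A.word (l ++ m) = A.word l * A.word m := by
  simp [word]

def internalDiff (l : List A.carrier) (ds : List ℤ) : A.Bar :=
  ∑ i ∈ range l.length, pm (bdeg (ds.take i)) • A.word (l.set i (A.d (l.getD i 0)))

def barPartial (l : List A.carrier) (ds : List ℤ) : A.Bar :=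
  ∑ i ∈ range (l.length - 1), pm (bdeg (ds.take (i + 1))) •
    A.word (l.take i ++ (l.getD i 0 * l.getD (i + 1) 0) :: l.drop (i + 2))

variable {A}

lemma internalDiff_append {l : List A.carrier} {ds : List ℤ} (hl : l.length = ds.length)
    (m : List A.carrier) (es : List ℤ) :
    A.internalDiff (l ++ m) (ds ++ es) =
      A.internalDiff l ds * A.word m + pm (bdeg ds) • (A.word l * A.internalDiff m es) := by
  simp only [internalDiff, List.length_append, sum_range_add, sum_mul, mul_sum, smul_sum,
    smul_mul_assoc, mul_smul_comm, smul_smul]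
  congr 1 <;> refine sum_congr rfl fun i hi => ?_
  · have hi : i < l.length := mem_range.1 hi
    rw [List.take_append_of_le_length (by omega), List.getD_append _ _ _ _ hi,
      List.set_append, if_pos hi, word_append]
  · rw [hl, List.take_length_add_append, ← hl, List.getD_append_right _ _ _ _ (by omega),
      List.set_append, if_neg (by omega), Nat.add_sub_cancel_left, word_append,
      bdeg_append, pm_add]

lemma barPartial_concat_append_cons {l : List A.carrier} {ds : List ℤ}
    (hl : l.length = ds.length) (a b : A.carrier) (n : ℤ) (m : List A.carrier)
    (es : List ℤ) :
    A.barPartial ((l ++ [a]) ++ b :: m) ((ds ++ [n]) ++ es) =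
      A.barPartial (l ++ [a]) (ds ++ [n]) * A.word (b :: m) +
        pm (bdeg (ds ++ [n])) • A.word (l ++ (a * b) :: m) +
        pm (bdeg (ds ++ [n])) • (A.word (l ++ [a]) * A.barPartial (b :: m) es) := by
  have hL : (l ++ [a]).length = l.length + 1 := by simp
  have hD : (ds ++ [n]).length = l.length + 1 := by simp [hl]
  unfold barPartial
  rw [show ((l ++ [a]) ++ b :: m).length - 1 = (l.length + 1) + m.length by simp; omega,
    sum_range_add, sum_range_succ, hL]
  simp only [List.length_cons, Nat.add_sub_cancel, sum_mul, mul_sum, smul_sum, smul_mul_assoc,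
    mul_smul_comm, smul_smul]
  congr 1
  congr 1
  · refine sum_congr rfl fun i hi => ?_
    have hi : i < l.length := mem_range.1 hi
    have hD' : i + 1 ≤ (ds ++ [n]).length := by omega
    have h₀ : i < (l ++ [a]).length := by omega
    have h₁ : i + 1 < (l ++ [a]).length := by omega
    rw [List.take_append_of_le_length hD', List.take_append_of_le_length h₀.le,
      List.getD_append _ _ _ _ h₀, List.getD_append _ _ _ _ h₁,
      List.drop_append_of_le_length h₁, ← word_append]
    simp
  · have hds : (ds ++ [n] ++ es).take (l.length + 1) = ds ++ [n] := by
      rw [← hD, List.take_left]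
    rw [hds]
    simp
  · refine sum_congr rfl fun j _ => ?_
    rw [show l.length + 1 + j + 1 = (ds ++ [n]).length + (j + 1) by omega,
      List.take_length_add_append, ← hL, List.take_length_add_append,
      List.getD_append_right _ _ _ _ (by omega), List.getD_append_right _ _ _ _ (by omega),
      add_assoc, List.drop_length_add_append, bdeg_append, pm_add, ← word_append]
    simp [← hl]

lemma Homog.nil : A.Homog [] [] :=
  ⟨rfl, fun _ => by simp⟩

lemma Homog.singleton {a : A.carrier} {n : ℤ} (ha : a ∈ A.grading n) : A.Homog [a] [n] := by
  refine ⟨rfl, fun i => ?_⟩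
  rcases i with _ | i
  · exact ha
  · simp

lemma Homog.append {l m : List A.carrier} {ds es : List ℤ}
    (hl : A.Homog l ds) (hm : A.Homog m es) : A.Homog (l ++ m) (ds ++ es) := by
  obtain ⟨hlen, hl⟩ := hl
  refine ⟨by simp [hlen, hm.1], fun i => ?_⟩
  by_cases hi : i < l.length
  · rw [List.getD_append l m 0 i hi, List.getD_append ds es 0 i (by omega)]
    exact hl i
  · rw [List.getD_append_right l m 0 i (by omega),
      List.getD_append_right ds es 0 i (by omega), hlen]
    exact hm.2 _

lemma Homog.exists_eq_concat {l : List A.carrier} {a : A.carrier} {ds : List ℤ}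
    (h : A.Homog (l ++ [a]) ds) :
    ∃ ds' n, ds = ds' ++ [n] ∧ A.Homog l ds' ∧ a ∈ A.grading n := by
  obtain ⟨hlen, hmem⟩ := h
  rcases ds.eq_nil_or_concat' with rfl | ⟨ds, n, rfl⟩
  · simp at hlen
  have hlen : l.length = ds.length := by simpa using hlen
  refine ⟨ds, n, rfl, ⟨hlen, fun i => ?_⟩, by simpa [hlen] using hmem l.length⟩
  by_cases hi : i < l.length
  · have hi' := hmem i
    rwa [List.getD_append l [a] 0 i hi, List.getD_append ds [n] 0 i (by omega)] at hi'
  · rw [List.getD_eq_default _ _ (not_lt.1 hi)]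
    exact zero_mem _

variable (A)

lemma span_homog_words :
    Submodule.span R {x | ∃ l ds, A.Homog l ds ∧ x = A.word l} = ⊤ := by
  rw [eq_top_iff]
  rintro x -
  induction x using TensorAlgebra.induction with
  | algebraMap r =>
    rw [Algebra.algebraMap_eq_smul_one]
    exact Submodule.smul_mem _ _ (Submodule.subset_span ⟨[], [], Homog.nil, rfl⟩)
  | ι a =>
    have ha : a ∈ ⨆ i, A.grading i := by
      rw [A.grading_internal.submodule_iSup_eq_top]
      trivial
    induction ha using Submodule.iSup_induction' with
    | mem i a ha => exact Submodule.subset_span ⟨[a], [i], Homog.singleton ha, by simp⟩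
    | zero => simp
    | add a b _ _ ha hb => simpa using add_mem ha hb
  | mul x y hx hy =>
    have hxy := Submodule.mul_mem_mul hx hy
    rw [Submodule.span_mul_span] at hxy
    refine Submodule.span_le.2 ?_ hxy
    rintro _ ⟨_, ⟨l, ds, hl, rfl⟩, _, ⟨m, es, hm, rfl⟩, rfl⟩
    exact Submodule.subset_span ⟨l ++ m, ds ++ es, hl.append hm, (A.word_append l m).symm⟩
  | add x y hx hy => exact add_mem hx hy

variable {A}

lemma tensor_ext_homog_words {M : Type*} [AddCommGroup M] [Module R M]
    {f g : A.Bar ⊗[R] A.Bar →ₗ[R] M}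
    (h : ∀ (l m : List A.carrier) (ds es : List ℤ), A.Homog l ds → A.Homog m es →
      f (A.word l ⊗ₜ A.word m) = g (A.word l ⊗ₜ A.word m)) : f = g := by
  refine TensorProduct.curry_injective (LinearMap.ext_on A.span_homog_words ?_)
  rintro _ ⟨l, ds, hl, rfl⟩
  refine LinearMap.ext_on A.span_homog_words ?_
  rintro _ ⟨m, es, hm, rfl⟩
  exact h l m ds es hl hm

end DGAlgebra

namespace BarData

variable {R : Type} [CommRing R] {A : DGAlgebra R} (BD : BarData A)

@[simp]
lemma dB_one : BD.dB 1 = 0 := by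
  simpa using BD.dB_word [] [] DGAlgebra.Homog.nil

@[simp]
lemma sgnB_one : BD.sgnB 1 = 1 := by
  simpa [bdeg, pm_zero] using BD.sgnB_word [] [] DGAlgebra.Homog.nil

@[simp]
lemma α_one : BD.α 1 = 0 :=
  BD.α_word [] (by simp)

lemma dB_word_eq {l : List A.carrier} {ds : List ℤ} (hl : A.Homog l ds) :
    BD.dB (A.word l) = -A.internalDiff l ds + A.barPartial l ds :=
  BD.dB_word l ds hl

lemma dB_word_concat_mul_word_cons {l : List A.carrier} {a : A.carrier} {ds : List ℤ}
    {n : ℤ} (hl : A.Homog (l ++ [a]) (ds ++ [n])) {b : A.carrier} {m : List A.carrier}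
    {es : List ℤ} (hm : A.Homog (b :: m) es) :
    BD.dB (A.word (l ++ [a]) * A.word (b :: m)) =
      BD.dB (A.word (l ++ [a])) * A.word (b :: m) +
        BD.sgnB (A.word (l ++ [a])) * BD.dB (A.word (b :: m)) +
        pm (bdeg (ds ++ [n])) • A.word (l ++ (a * b) :: m) := by
  have hlen : l.length = ds.length := by simpa using hl.1
  rw [← A.word_append, BD.dB_word_eq (hl.append hm), BD.dB_word_eq hl, BD.dB_word_eq hm,
    BD.sgnB_word _ _ hl, DGAlgebra.internalDiff_append hl.1,
    DGAlgebra.barPartial_concat_append_cons hlen]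
  simp only [add_mul, neg_mul, smul_mul_assoc, mul_add, mul_neg]
  abel

lemma dB_word_mul {l m : List A.carrier} {ds es : List ℤ} (hl : A.Homog l ds)
    (hm : A.Homog m es) :
    BD.dB (A.word l * A.word m) =
      BD.dB (A.word l) * A.word m + BD.sgnB (A.word l) * BD.dB (A.word m) +
        ∑ i ∈ range (l.length + 1), ∑ j ∈ range (m.length + 1),
          BD.sgnB (A.word (l.take i)) *
            (TensorAlgebra.ι R (-(A.sgn (BD.α (A.word (l.drop i))) *
              BD.α (A.word (m.take j)))) * A.word (m.drop j)) := by
  rcases l.eq_nil_or_concat' with rfl | ⟨l, a, rfl⟩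
  · simp
  rcases m with _ | ⟨b, m⟩
  · simp
  obtain ⟨ds, n, rfl, hl', ha⟩ := hl.exists_eq_concat
  rw [BD.dB_word_concat_mul_word_cons hl hm, sum_eq_single_of_mem l.length (by simp),
    sum_eq_single_of_mem 1 (by simp)]
  · simp only [List.take_left, List.drop_left, List.take_succ_cons, List.take_zero,
      List.drop_succ_cons, List.drop_zero, BD.α_single, A.sgn_apply ha, BD.sgnB_word l ds hl']
    congr 1
    rw [bdeg_append, bdeg_singleton, pm_add, pm_sub_one, A.word_append, A.word_cons]
    simp only [smul_mul_assoc, map_neg, map_zsmul, neg_mul, mul_neg, mul_smul_comm, smul_smul,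
      neg_smul, mul_comm (pm n)]
  · intro j hj hj'
    rw [BD.α_word ((b :: m).take j) (by simp at hj ⊢; omega)]
    simp
  · intro i hi hi'
    refine sum_eq_zero fun j _ => ?_
    rw [BD.α_word ((l ++ [a]).drop i) (by simp at hi ⊢; omega)]
    simp

end BarData

/-- For an augmented unital associative dg algebra `A` over `R`, the
differential of the concatenation operator `∇ : BA ⊗ BA → BA` (i.e.
`d(∇) = d_B ∘ ∇ - ∇ ∘ d_{BA⊗BA}`) equals
`∇⁽³⁾ (1 ⊗ μ̄ ⊗ 1)(1 ⊗ π ⊗ π ⊗ 1)(Δ ⊗ Δ)`, where `π : BA → B₁A = s⁻¹A` is the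
projection, `μ̄ = σ⁻¹ μ_A (σ ⊗ σ)` is the desuspended multiplication (realized on
elements by `[a] ⊗ [b] ↦ (-1)^{|a|-1} [ab]`), `Δ` is the deconcatenation coproduct and
`∇⁽³⁾` the threefold concatenation.  All Koszul signs are expressed via the sign
operators. -/
theorem concat_differential {R : Type} [CommRing R] (A : DGAlgebra R) (BD : BarData A) :
    BD.dB ∘ₗ A.concat - A.concat ∘ₗ BD.dBB =
      -- `∇⁽³⁾ : BA ⊗ (BA ⊗ BA) → BA`
      (A.concat ∘ₗ TensorProduct.map LinearMap.id A.concat) ∘ₗ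
      -- `1 ⊗ (μ̄ (π ⊗ π)) ⊗ 1`, with the Koszul sign of the degree-one middle map
      (TensorProduct.map BD.sgnB (TensorProduct.map
        ((TensorAlgebra.ι R) ∘ₗ (-(LinearMap.mul' R A.carrier)) ∘ₗ
          TensorProduct.map (A.sgn ∘ₗ BD.α) BD.α)
        LinearMap.id)) ∘ₗ
      -- regrouping `(BA ⊗ BA) ⊗ (BA ⊗ BA) ≅ BA ⊗ ((BA ⊗ BA) ⊗ BA)`
      (TensorProduct.congr (LinearEquiv.refl R A.Bar)
        (TensorProduct.assoc R A.Bar A.Bar A.Bar).symm).toLinearMap ∘ₗ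
      (TensorProduct.assoc R A.Bar A.Bar (A.Bar ⊗[R] A.Bar)).toLinearMap ∘ₗ
      TensorProduct.map BD.Δ BD.Δ := by
  refine DGAlgebra.tensor_ext_homog_words fun l m ds es hl hm => ?_
  simp only [DGAlgebra.concat, BarData.dBB, LinearMap.sub_apply, LinearMap.add_apply,
    LinearMap.coe_comp, Function.comp_apply, LinearEquiv.coe_coe, TensorProduct.map_tmul,
    BD.Δ_word, TensorProduct.sum_tmul, TensorProduct.tmul_sum, map_sum, map_add,
    TensorProduct.assoc_tmul, TensorProduct.congr_tmul, LinearEquiv.refl_apply,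
    TensorProduct.assoc_symm_tmul, LinearMap.neg_apply, LinearMap.mul'_apply,
    LinearMap.id_coe, id_eq]
  rw [BD.dB_word_mul hl hm, add_sub_cancel_left, sum_comm]
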